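/- If K = G ⋈ H is an internal Zappa–Szép product of monoids and K is a Garside monoid, then the submonoids act on each other by bijections: for all h ∈ H the maps g ↦ h ▷ g and g ↦ g ◀ h are bijections of G, and for all g ∈ G the maps h ↦ h ◁ g and h ↦ g ▶ h are bijections of H. -/

import Mathlib

namespace ZSPaper

/-- Internal Zappa–Szép product: every element of `K` has a unique `GH`-decomposition
and a unique `HG`-decomposition. -/
structure ZS (K : Type*) [Monoid K] (G H : Submonoid K) : Prop where
  exGH : ∀ k : K, ∃! p : G × H, (p.1 : K) * (p.2 : K) = k
  exHG : ∀ k : K, ∃! p : H × G, (p.1 : K) * (p.2 : K) = k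

variable {K : Type*} [Monoid K] {G H : Submonoid K}

/-- `h ▷ g`, defined by `h * g = (h ▷ g) * (h ◁ g)`. -/
noncomputable def ZS.rtr (zs : ZS K G H) (h : H) (g : G) : G :=
  ((zs.exGH ((h : K) * (g : K))).choose).1

/-- `h ◁ g`, defined by `h * g = (h ▷ g) * (h ◁ g)`. -/
noncomputable def ZS.rtl (zs : ZS K G H) (h : H) (g : G) : H :=
  ((zs.exGH ((h : K) * (g : K))).choose).2

/-- `g ▶ h`, defined by `g * h = (g ▶ h) * (g ◀ h)`. -/
noncomputable def ZS.ltr (zs : ZS K G H) (g : G) (h : H) : H :=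
  ((zs.exHG ((g : K) * (h : K))).choose).1

/-- `g ◀ h`, defined by `g * h = (g ▶ h) * (g ◀ h)`. -/
noncomputable def ZS.ltl (zs : ZS K G H) (g : G) (h : H) : G :=
  ((zs.exHG ((g : K) * (h : K))).choose).2

/-- Right divisibility: `x` is a suffix of `y`. -/
def RDvd {M : Type*} [Monoid M] (x y : M) : Prop := ∃ u, y = u * x

/-- An atom of a monoid. -/
def MAtom {M : Type*} [Monoid M] (a : M) : Prop :=
  a ≠ 1 ∧ ∀ u v : M, a = u * v → u = 1 ∨ v = 1

/-- An atomic monoid: generated by its atoms, with bounded lengths of atomic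
decompositions. -/
def Atomic (M : Type*) [Monoid M] : Prop :=
  (∀ x : M, ∃ l : List M, (∀ a ∈ l, MAtom a) ∧ l.prod = x) ∧
  ∀ x : M, ∃ N : ℕ, ∀ l : List M, (∀ a ∈ l, MAtom a) → l.prod = x → l.length ≤ N

/-- `m` is the least common upper bound of the set `S` with respect to
left divisibility. -/
def IsDvdLUB {M : Type*} [Monoid M] (S : Set M) (m : M) : Prop :=
  (∀ s ∈ S, s ∣ m) ∧ ∀ n, (∀ s ∈ S, s ∣ n) → m ∣ n

/-- `m` is the least common upper bound of `x` and `y` with respect to left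
divisibility. -/
def IsDvdLCM {M : Type*} [Monoid M] (x y m : M) : Prop :=
  x ∣ m ∧ y ∣ m ∧ ∀ n, x ∣ n → y ∣ n → m ∣ n

/-- `d = Δ_x`, the least common upper bound of `{ y \ x : y ∈ M }`, where
`y * (y \ x) = y ∨ x`. -/
def IsDeltaOf {M : Type*} [Monoid M] (x d : M) : Prop :=
  IsDvdLUB {t : M | ∃ y, IsDvdLCM y x (y * t)} d

/-- A Garside structure on a monoid `M` with Garside element `Δ`. -/
structure GarsideStructure (M : Type*) [Monoid M] (Δ : M) : Prop where
  mul_left_cancel : ∀ a b c : M, a * b = a * c → b = c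
  mul_right_cancel : ∀ a b c : M, b * a = c * a → b = c
  atomic : Atomic M
  meet_left : ∀ x y : M, ∃ d, d ∣ x ∧ d ∣ y ∧ ∀ e, e ∣ x → e ∣ y → e ∣ d
  join_left : ∀ x y : M, ∃ m, x ∣ m ∧ y ∣ m ∧ ∀ n, x ∣ n → y ∣ n → m ∣ n
  meet_right : ∀ x y : M, ∃ d, RDvd d x ∧ RDvd d y ∧ ∀ e, RDvd e x → RDvd e y → RDvd e d
  join_right : ∀ x y : M, ∃ m, RDvd x m ∧ RDvd y m ∧ ∀ n, RDvd x n → RDvd y n → RDvd m n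
  balanced : ∀ x, x ∣ Δ ↔ RDvd x Δ
  div_finite : {x : M | x ∣ Δ}.Finite
  div_gen : Submonoid.closure {x : M | x ∣ Δ} = ⊤

end ZSPaper

open ZSPaper Function

/-! Garside monoids have no non-trivial units, so uniqueness of the two decompositions makes
`G` and `H` closed under taking factors, with `G ∩ H = 1`. If `h * g₁` and `h * g₂` have the same
`G`-part `a`, their left gcd is a common multiple of `h` and `a` whose cofactors lie in `G ∩ H`,
so `g₁ = g₂`. For `a ∈ G`, the left lcm of `h` and `a` is `h * x = a * y` with `x ∈ G`, `y ∈ H`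
by minimality, so `h ▷ x = a`. Right gcds and lcms handle `◁` in the same way, and exchanging the
roles of `G` and `H` turns `▷, ◁` into `▶, ◀`. -/

namespace ZSPaper

section Garside

variable {M : Type*} [Monoid M]

theorem Atomic.eq_nil_of_prod_eq_one (hM : Atomic M) {l : List M} (hl : ∀ a ∈ l, MAtom a)
    (h1 : l.prod = 1) : l = [] := by
  obtain ⟨N, hN⟩ := hM.2 1
  have hlen := hN (List.replicate (N + 1) l).flatten
    (by simpa [List.mem_flatten] using hl)
    (by simp [List.prod_flatten, h1])
  simp only [List.length_flatten, List.map_replicate, List.sum_replicate, smul_eq_mul] at hlen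
  exact List.length_eq_zero_iff.mp (by nlinarith)

theorem Atomic.subsingleton_units (hM : Atomic M) : Subsingleton Mˣ := by
  refine subsingleton_of_forall_eq 1 fun u => Units.ext ?_
  obtain ⟨l, hl, hlu⟩ := hM.1 u
  obtain ⟨l', hl', hl'u⟩ := hM.1 ↑u⁻¹
  have hnil := hM.eq_nil_of_prod_eq_one (l := l ++ l')
    (fun a ha => (List.mem_append.1 ha).elim (hl a) (hl' a))
    (by rw [List.prod_append, hlu, hl'u, Units.mul_inv])
  rw [← hlu, (List.append_eq_nil_iff.1 hnil).1, List.prod_nil, Units.val_one]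

theorem GarsideStructure.isCancelMul {Δ : M} (gs : GarsideStructure M Δ) : IsCancelMul M where
  mul_left_cancel a _ _ := gs.mul_left_cancel a _ _
  mul_right_cancel a _ _ := gs.mul_right_cancel a _ _

end Garside

namespace ZS

variable {K : Type*} [Monoid K] {G H : Submonoid K}

theorem symm (zs : ZS K G H) : ZS K H G := ⟨zs.exHG, zs.exGH⟩

theorem rtr_mul_rtl (zs : ZS K G H) (h : H) (g : G) : (zs.rtr h g : K) * zs.rtl h g = h * g :=
  (zs.exGH _).choose_spec.1

theorem exists_mul_eq (zs : ZS K G H) (k : K) : ∃ g ∈ G, ∃ h ∈ H, g * h = k :=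
  let ⟨⟨g, h⟩, e, _⟩ := zs.exGH k
  ⟨g, g.2, h, h.2, e⟩

theorem eq_and_eq_of_mul_eq_mul (zs : ZS K G H) {g₁ g₂ h₁ h₂ : K} (hg₁ : g₁ ∈ G)
    (hg₂ : g₂ ∈ G) (hh₁ : h₁ ∈ H) (hh₂ : h₂ ∈ H) (e : g₁ * h₁ = g₂ * h₂) :
    g₁ = g₂ ∧ h₁ = h₂ := by
  simpa using (zs.exGH (g₂ * h₂)).unique (y₁ := (⟨g₁, hg₁⟩, ⟨h₁, hh₁⟩))
    (y₂ := (⟨g₂, hg₂⟩, ⟨h₂, hh₂⟩)) e rfl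

theorem eq_one_of_mem_of_mem (zs : ZS K G H) {x : K} (hG : x ∈ G) (hH : x ∈ H) : x = 1 :=
  (zs.eq_and_eq_of_mul_eq_mul hG G.one_mem H.one_mem hH (by rw [mul_one, one_mul])).1

theorem rtr_eq_of_mul_eq (zs : ZS K G H) {h : H} {g a : G} {k : K} (hk : k ∈ H)
    (e : (h : K) * g = a * k) : zs.rtr h g = a :=
  Subtype.ext (zs.eq_and_eq_of_mul_eq_mul (zs.rtr h g).2 a.2 (zs.rtl h g).2 hk
    ((zs.rtr_mul_rtl h g).trans e)).1

theorem rtl_eq_of_mul_eq (zs : ZS K G H) {h : H} {g : G} {a : K} {k : H} (ha : a ∈ G)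
    (e : (h : K) * g = a * k) : zs.rtl h g = k :=
  Subtype.ext (zs.eq_and_eq_of_mul_eq_mul (zs.rtr h g).2 ha (zs.rtl h g).2 k.2
    ((zs.rtr_mul_rtl h g).trans e)).2

theorem mem_right_of_mul_mem (zs : ZS K G H) [IsDedekindFiniteMonoid K] [Subsingleton Kˣ]
    {x y : K} (hxy : x * y ∈ G) : y ∈ G := by
  obtain ⟨g₁, hg₁, h₁, hh₁, rfl⟩ := zs.exists_mul_eq x
  obtain ⟨g₂, hg₂, h₂, hh₂, rfl⟩ := zs.exists_mul_eq y
  obtain ⟨g₃, hg₃, h₃, hh₃, e⟩ := zs.exists_mul_eq (h₁ * g₂)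
  have hprod : g₁ * g₃ * (h₃ * h₂) = g₁ * h₁ * (g₂ * h₂) * 1 := by
    rw [mul_one, mul_assoc g₁ h₁, ← mul_assoc h₁, ← e]
    simp only [mul_assoc]
  have hunit := (zs.eq_and_eq_of_mul_eq_mul (G.mul_mem hg₁ hg₃) hxy
    (H.mul_mem hh₃ hh₂) H.one_mem hprod).2
  rwa [(IsUnit.of_mul_eq_one_right _ hunit).eq_one, mul_one]

theorem mem_left_of_mul_mem (zs : ZS K G H) [IsDedekindFiniteMonoid K] [Subsingleton Kˣ]
    {x y : K} (hxy : x * y ∈ G) : x ∈ G := by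
  have hy := zs.mem_right_of_mul_mem hxy
  obtain ⟨h, hh, g, hg, rfl⟩ := zs.symm.exists_mul_eq x
  have h_eq := (zs.symm.eq_and_eq_of_mul_eq_mul hh H.one_mem (G.mul_mem hg hy) hxy
    (by rw [one_mul, mul_assoc])).1
  rwa [h_eq, one_mul]

theorem dvd_of_dvd_mul_of_mem (zs : ZS K G H) {a g k : K} (ha : a ∈ G) (hg : g ∈ G)
    (hk : k ∈ H) (hdvd : a ∣ g * k) : a ∣ g := by
  obtain ⟨c, hc⟩ := hdvd
  obtain ⟨g', hg', k', hk', rfl⟩ := zs.exists_mul_eq c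
  exact ⟨g', (zs.eq_and_eq_of_mul_eq_mul hg (G.mul_mem ha hg') hk hk'
    (by rw [hc, mul_assoc])).1⟩

section Left

variable [IsLeftCancelMul K] [Subsingleton Kˣ]

theorem eq_of_mul_eq_mul_of_gcd (zs : ZS K G H)
    (hgcd : ∀ x y : K, ∃ d, d ∣ x ∧ d ∣ y ∧ ∀ e, e ∣ x → e ∣ y → e ∣ d)
    {s t u₁ u₂ v₁ v₂ : K} (hu₁ : u₁ ∈ G) (hu₂ : u₂ ∈ G) (hv₁ : v₁ ∈ H) (hv₂ : v₂ ∈ H)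
    (e₁ : s * u₁ = t * v₁) (e₂ : s * u₂ = t * v₂) : u₁ = u₂ := by
  obtain ⟨d, hd₁, hd₂, hd⟩ := hgcd (s * u₁) (s * u₂)
  obtain ⟨p, hp⟩ := hd s (dvd_mul_right s u₁) (dvd_mul_right s u₂)
  obtain ⟨q, hq⟩ := hd t ⟨v₁, e₁⟩ ⟨v₂, e₂⟩
  -- the cofactor of `d` lies in `G` (as a factor of `u = p * z`) and in `H` (of `v = q * z`)
  suffices key : ∀ u v, u ∈ G → v ∈ H → s * u = t * v → d ∣ s * u → u = p from
    (key _ _ hu₁ hv₁ e₁ hd₁).trans (key _ _ hu₂ hv₂ e₂ hd₂).symm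
  rintro u v hu hv e ⟨z, hz⟩
  have hu' : u = p * z := mul_left_cancel (by rw [hz, hp, mul_assoc])
  have hv' : v = q * z := mul_left_cancel (by rw [← e, hz, hq, mul_assoc])
  have hz₁ : z = 1 := zs.eq_one_of_mem_of_mem (zs.mem_right_of_mul_mem (hu' ▸ hu))
    (zs.symm.mem_right_of_mul_mem (hv' ▸ hv))
  rw [hu', hz₁, mul_one]

theorem mem_of_lcm (zs : ZS K G H) {h a x m : K} (ha : a ∈ G) (hm : m = h * x)
    (ham : a ∣ m) (hmin : ∀ n, h ∣ n → a ∣ n → m ∣ n) : x ∈ G := by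
  obtain ⟨g, hg, k, hk, rfl⟩ := zs.exists_mul_eq x
  obtain ⟨α, hα, β, hβ, e⟩ := zs.exists_mul_eq (h * g)
  have haα : a ∣ α := zs.dvd_of_dvd_mul_of_mem ha hα (H.mul_mem hβ hk)
    (by rwa [← mul_assoc, e, mul_assoc, ← hm])
  -- `h * g` is a common multiple of `h` and `a`, while `m = h * g * k`: so `k` is a unit
  obtain ⟨w, hw⟩ := hmin (h * g) (dvd_mul_right h g) (haα.trans ⟨β, e.symm⟩)
  have hkw : k * w = 1 := mul_left_cancel (a := h * g)
    (by rw [mul_one, ← mul_assoc, mul_assoc h g k, ← hm, ← hw])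
  rwa [(IsUnit.of_mul_eq_one w hkw).eq_one, mul_one]

theorem exists_mul_eq_mul_of_lcm (zs : ZS K G H)
    (hlcm : ∀ x y : K, ∃ m, x ∣ m ∧ y ∣ m ∧ ∀ n, x ∣ n → y ∣ n → m ∣ n)
    {h a : K} (hh : h ∈ H) (ha : a ∈ G) : ∃ x ∈ G, ∃ y ∈ H, h * x = a * y := by
  obtain ⟨m, ⟨x, hx⟩, ⟨y, hy⟩, hmin⟩ := hlcm h a
  exact ⟨x, zs.mem_of_lcm ha hx ⟨y, hy⟩ hmin,
    y, zs.symm.mem_of_lcm hh hy ⟨x, hx⟩ fun n hh hn => hmin n hn hh, hx.symm.trans hy⟩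

theorem rtr_bijective (zs : ZS K G H)
    (hgcd : ∀ x y : K, ∃ d, d ∣ x ∧ d ∣ y ∧ ∀ e, e ∣ x → e ∣ y → e ∣ d)
    (hlcm : ∀ x y : K, ∃ m, x ∣ m ∧ y ∣ m ∧ ∀ n, x ∣ n → y ∣ n → m ∣ n) (h : H) :
    Bijective (zs.rtr h) := by
  refine ⟨fun g₁ g₂ e => Subtype.ext ?_, fun a => ?_⟩
  · refine zs.eq_of_mul_eq_mul_of_gcd hgcd g₁.2 g₂.2 (zs.rtl h g₁).2 (zs.rtl h g₂).2
      (zs.rtr_mul_rtl h g₁).symm ?_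
    rw [← zs.rtr_mul_rtl h g₂, e]
  · obtain ⟨x, hx, y, hy, e⟩ := zs.exists_mul_eq_mul_of_lcm hlcm h.2 a.2
    exact ⟨⟨x, hx⟩, zs.rtr_eq_of_mul_eq hy e⟩

end Left

theorem rdvd_of_rdvd_mul_of_mem (zs : ZS K G H) {b g k : K} (hb : b ∈ H) (hg : g ∈ G)
    (hk : k ∈ H) (hdvd : RDvd b (g * k)) : RDvd b k := by
  obtain ⟨c, hc⟩ := hdvd
  obtain ⟨g', hg', k', hk', rfl⟩ := zs.exists_mul_eq c
  exact ⟨k', (zs.eq_and_eq_of_mul_eq_mul hg hg' hk (H.mul_mem hk' hb)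
    (by rw [hc, mul_assoc])).2⟩

section Right

variable [IsRightCancelMul K] [Subsingleton Kˣ]

theorem eq_of_mul_eq_mul_of_rgcd (zs : ZS K G H)
    (hgcd : ∀ x y : K, ∃ d, RDvd d x ∧ RDvd d y ∧ ∀ e, RDvd e x → RDvd e y → RDvd e d)
    {s t u₁ u₂ v₁ v₂ : K} (hu₁ : u₁ ∈ G) (hu₂ : u₂ ∈ G) (hv₁ : v₁ ∈ H) (hv₂ : v₂ ∈ H)
    (e₁ : u₁ * s = v₁ * t) (e₂ : u₂ * s = v₂ * t) : u₁ = u₂ := by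
  obtain ⟨d, hd₁, hd₂, hd⟩ := hgcd (u₁ * s) (u₂ * s)
  obtain ⟨p, hp⟩ := hd s ⟨u₁, rfl⟩ ⟨u₂, rfl⟩
  obtain ⟨q, hq⟩ := hd t ⟨v₁, e₁⟩ ⟨v₂, e₂⟩
  suffices key : ∀ u v, u ∈ G → v ∈ H → u * s = v * t → RDvd d (u * s) → u = p from
    (key _ _ hu₁ hv₁ e₁ hd₁).trans (key _ _ hu₂ hv₂ e₂ hd₂).symm
  rintro u v hu hv e ⟨z, hz⟩
  have hu' : u = z * p := mul_right_cancel (b := s) (by rw [hz, hp, mul_assoc])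
  have hv' : v = z * q := mul_right_cancel (b := t) (by rw [← e, hz, hq, mul_assoc])
  have hz₁ : z = 1 := zs.eq_one_of_mem_of_mem (zs.mem_left_of_mul_mem (hu' ▸ hu))
    (zs.symm.mem_left_of_mul_mem (hv' ▸ hv))
  rw [hu', hz₁, one_mul]

theorem mem_of_rlcm (zs : ZS K G H) {g b x m : K} (hb : b ∈ H) (hm : m = x * g)
    (hbm : RDvd b m) (hmin : ∀ n, RDvd g n → RDvd b n → RDvd m n) : x ∈ H := by
  obtain ⟨g₁, hg₁, h₁, hh₁, rfl⟩ := zs.exists_mul_eq x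
  obtain ⟨α, hα, β, hβ, e⟩ := zs.exists_mul_eq (h₁ * g)
  obtain ⟨c, hc⟩ : RDvd b β := zs.rdvd_of_rdvd_mul_of_mem hb (G.mul_mem hg₁ hα) hβ
    (by rwa [mul_assoc, e, ← mul_assoc, ← hm])
  obtain ⟨w, hw⟩ := hmin (h₁ * g) ⟨h₁, rfl⟩ ⟨α * c, by rw [← e, hc, mul_assoc]⟩
  have hwg : w * g₁ = 1 := mul_right_cancel (b := h₁ * g)
    (by rw [one_mul, mul_assoc, ← mul_assoc g₁ h₁ g, ← hm, ← hw])
  rwa [(IsUnit.of_mul_eq_one_right w hwg).eq_one, one_mul]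

theorem exists_mul_eq_mul_of_rlcm (zs : ZS K G H)
    (hlcm : ∀ x y : K, ∃ m, RDvd x m ∧ RDvd y m ∧ ∀ n, RDvd x n → RDvd y n → RDvd m n)
    {g b : K} (hg : g ∈ G) (hb : b ∈ H) : ∃ x ∈ H, ∃ y ∈ G, x * g = y * b := by
  obtain ⟨m, ⟨x, hx⟩, ⟨y, hy⟩, hmin⟩ := hlcm g b
  exact ⟨x, zs.mem_of_rlcm hb hx ⟨y, hy⟩ hmin,
    y, zs.symm.mem_of_rlcm hg hy ⟨x, hx⟩ fun n hg hn => hmin n hn hg, hx.symm.trans hy⟩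

theorem rtl_bijective (zs : ZS K G H)
    (hgcd : ∀ x y : K, ∃ d, RDvd d x ∧ RDvd d y ∧ ∀ e, RDvd e x → RDvd e y → RDvd e d)
    (hlcm : ∀ x y : K, ∃ m, RDvd x m ∧ RDvd y m ∧ ∀ n, RDvd x n → RDvd y n → RDvd m n)
    (g : G) : Bijective fun h : H => zs.rtl h g := by
  refine ⟨fun h₁ h₂ (e : zs.rtl h₁ g = zs.rtl h₂ g) => Subtype.ext ?_, fun b => ?_⟩
  · refine zs.symm.eq_of_mul_eq_mul_of_rgcd hgcd h₁.2 h₂.2 (zs.rtr h₁ g).2 (zs.rtr h₂ g).2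
      (zs.rtr_mul_rtl h₁ g).symm ?_
    rw [e, zs.rtr_mul_rtl]
  · obtain ⟨x, hx, y, hy, e⟩ := zs.exists_mul_eq_mul_of_rlcm hlcm g.2 b.2
    exact ⟨⟨x, hx⟩, zs.rtl_eq_of_mul_eq hy e⟩

end Right

end ZS

end ZSPaper

theorem stmt17 {K : Type*} [Monoid K] {G H : Submonoid K} (zs : ZS K G H)
    (Δ : K) (gs : GarsideStructure K Δ) :
    (∀ h : H, Function.Bijective (zs.rtr h)) ∧
    (∀ h : H, Function.Bijective (fun g : G => zs.ltl g h)) ∧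
    (∀ g : G, Function.Bijective (fun h : H => zs.rtl h g)) ∧
    (∀ g : G, Function.Bijective (zs.ltr g)) := by
  have := gs.isCancelMul
  have := gs.atomic.subsingleton_units
  -- `zs.symm.rtr` and `zs.symm.rtl` are `zs.ltr` and `zs.ltl` by definition
  exact ⟨zs.rtr_bijective gs.meet_left gs.join_left,
    zs.symm.rtl_bijective gs.meet_right gs.join_right,
    zs.rtl_bijective gs.meet_right gs.join_right,
    zs.symm.rtr_bijective gs.meet_left gs.join_left⟩
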